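/- (Non-trivial chase result gives a counter-model.) Let Σ ∪ {σ} be a set of egd's and tgd's over a finite attribute set R, and let σ_0, σ_1, … be a chasing sequence of σ over Σ such that chase∞(Σ, σ) is not trivial. Then the relation T¹ := pr_1(chase∞(Σ, σ)) over R satisfies every dependency in Σ but does not satisfy σ. -/
import Mathlib


namespace EmbeddedDependencies

noncomputable section
open Classical

/- Values and attributes coincide; we take them to be natural numbers
   (a countably infinite set, with its total well-founded order `<`). -/
abbrev Val := ℕ

/-- A tuple over an attribute set `R` is (canonically encoded as) a total function
    `Val → Val`; only its values on `R` matter. -/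
abbrev Tuple := Val → Val

/-- A relation is a set of tuples. -/
abbrev Rel := Set Tuple

/-- Canonical restriction of a tuple to the attribute set `R` (default value `0` outside `R`). -/
def restrictT (R : Set Val) (t : Tuple) : Tuple := fun a => if a ∈ R then t a else 0

/-- Restriction `r|_R` of a relation `r` to the attribute set `R`. -/
def restrictR (R : Set Val) (r : Rel) : Rel := (restrictT R) '' r

/-- `Val(T)`: the set of values occurring in the relation `T` over the attribute set `R`. -/
def valsOf (R : Set Val) (T : Rel) : Set Val := {v | ∃ t ∈ T, ∃ a ∈ R, t a = v}

/-- `f(T) ⊆ r|_R` for a valuation `f : Val → Val`. -/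
def Embeds (R : Set Val) (f : Val → Val) (T r : Rel) : Prop :=
  ∀ t ∈ T, restrictT R (f ∘ t) ∈ restrictR R r

/-- Satisfaction of the egd `(T, x = y)` over `R` by the relation `r`:
    every valuation `f` with `f(T) ⊆ r|_R` satisfies `f x = f y`. -/
def egdSat (R : Set Val) (T : Rel) (x y : Val) (r : Rel) : Prop :=
  ∀ f : Val → Val, Embeds R f T r → f x = f y

/-- Satisfaction of the tgd `(T, T')` over `R` by the relation `r`: every valuation `f`
    (on `Val(T)`) with `f(T) ⊆ r|_R` has an extension `g` to `Val(T')`, agreeing with `f`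
    on `Val(T) ∩ Val(T')`, with `g(T') ⊆ r|_R`. -/
def tgdSat (R : Set Val) (T T' : Rel) (r : Rel) : Prop :=
  ∀ f : Val → Val, Embeds R f T r →
    ∃ g : Val → Val, (∀ v ∈ valsOf R T ∩ valsOf R T', g v = f v) ∧ Embeds R g T' r

/-- Satisfaction of the inclusion dependency `A_1 … A_n ⊆ B_1 … B_n` by the relation `r`. -/
def indSat (A B : List Val) (r : Rel) : Prop :=
  ∀ s ∈ r, ∃ s' ∈ r, A.map s = B.map s'

/-- `A` is a sequence listing the attribute set `R`. -/
def ListsR (A : List Val) (R : Set Val) : Prop := A.Nodup ∧ ∀ a, a ∈ A ↔ a ∈ R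

/-- Dependencies: egd's and tgd's (with their attribute set) and ind's. -/
inductive Dep : Type
  | egd (R : Set Val) (T : Rel) (x y : Val)
  | tgd (R : Set Val) (T T' : Rel)
  | ind (A B : List Val)

/-- Satisfaction of a dependency by a relation. -/
def Dep.sat (r : Rel) : Dep → Prop
  | .egd R T x y => egdSat R T x y r
  | .tgd R T T' => tgdSat R T T' r
  | .ind A B => indSat A B r

/-- The attribute set `Att(σ)` of a dependency. -/
def Dep.att : Dep → Set Val
  | .egd R _ _ _ => R
  | .tgd R _ _ => R
  | .ind A B => {v | v ∈ A ∨ v ∈ B}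

def Dep.isEgd : Dep → Prop
  | .egd _ _ _ _ => True
  | _ => False

def Dep.isTgd : Dep → Prop
  | .tgd _ _ _ => True
  | _ => False

/-- `d` is an egd or a tgd. -/
def Dep.isET (d : Dep) : Prop := d.isEgd ∨ d.isTgd

/-- Well-formed egd/tgd over the attribute set `R`: finite tableaux, canonically encoded,
    and (for an egd) `x, y ∈ Val(T)`. -/
def Dep.wf (R : Set Val) : Dep → Prop
  | .egd R0 T x y => R0 = R ∧ T.Finite ∧ restrictR R T = T ∧
      x ∈ valsOf R T ∧ y ∈ valsOf R T
  | .tgd R0 T T' => R0 = R ∧ T.Finite ∧ T'.Finite ∧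
      restrictR R T = T ∧ restrictR R T' = T'
  | .ind _ _ => False

/-- `Σ ⊨ σ`: every relation over a superset of `R` satisfying every member of `Σ`
    satisfies `σ`. -/
def Entails (R : Set Val) (Sg : Set Dep) (s : Dep) : Prop :=
  ∀ S : Set Val, R ⊆ S → ∀ r : Rel, restrictR S r = r →
    (∀ d ∈ Sg, Dep.sat r d) → Dep.sat r s

/-- Apply a valuation `g` to every tuple of a relation over `R`. -/
def mapRel (R : Set Val) (g : Val → Val) (T : Rel) : Rel :=
  (fun t => restrictT R (g ∘ t)) '' T

/-- First component (tableau) of a dependency. -/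
def pr1 : Dep → Rel
  | .egd _ T _ _ => T
  | .tgd _ T _ => T
  | .ind _ _ => ∅

/-- Second component of a tgd. -/
def pr2T : Dep → Rel
  | .tgd _ _ T' => T'
  | _ => ∅

/-- Left value of the equality of an egd. -/
def eqFst : Dep → Val
  | .egd _ _ x _ => x
  | _ => 0

/-- Right value of the equality of an egd. -/
def eqSnd : Dep → Val
  | .egd _ _ _ y => y
  | _ => 0

/-- The values occurring in a dependency (over ambient attribute set `R`). -/
def depVals (R : Set Val) : Dep → Set Val
  | .egd _ T x y => valsOf R T ∪ {x, y}
  | .tgd _ T T' => valsOf R T ∪ valsOf R T'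
  | .ind A B => {v | v ∈ A ∨ v ∈ B}

/-- `g(σ)`: apply a valuation to a dependency. -/
def applyVal (R : Set Val) (g : Val → Val) : Dep → Dep
  | .egd R0 T x y => .egd R0 (mapRel R g T) (g x) (g y)
  | .tgd R0 T T' => .tgd R0 (mapRel R g T) (mapRel R g T')
  | .ind A B => .ind A B

/-- Replace the first component of a dependency. -/
def withPr1 (d : Dep) (T : Rel) : Dep :=
  match d with
  | .egd R0 _ x y => .egd R0 T x y
  | .tgd R0 _ T' => .tgd R0 T T'
  | .ind A B => .ind A B

/-- The valuation that is the identity everywhere except that it maps the greater of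
    `p, q` to the smaller. -/
def mergeVal (p q : Val) : Val → Val := fun v => if v = max p q then min p q else v

/-- `f` witnesses that the egd `(S, x = y)` is applicable to the tableau `T`. -/
def EgdAppF (R : Set Val) (S : Rel) (x y : Val) (T : Rel) (f : Val → Val) : Prop :=
  Embeds R f S T ∧ f x ≠ f y

/-- `f` witnesses that the tgd `(S, S')` is applicable to the tableau `T`:
    `f(S) ⊆ T` but no extension of `f` to `Val(S')` embeds `S'` into `T`. -/
def TgdAppF (R : Set Val) (S S' T : Rel) (f : Val → Val) : Prop :=
  Embeds R f S T ∧ ¬ ∃ g : Val → Val, (∀ v ∈ valsOf R S, g v = f v) ∧ Embeds R g S' T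

/-- The dependency `d` is applicable to the tableau `T`. -/
def Applicable (R : Set Val) (d : Dep) (T : Rel) : Prop :=
  match d with
  | .egd _ S x y => ∃ f, EgdAppF R S x y T f
  | .tgd _ S S' => ∃ f, TgdAppF R S S' T f
  | .ind _ _ => False

/-- One application of the egd rule of the chase, applying `d = (S, x = y)` via `f`,
    recording the merging valuation `g` and the pair `(f x, f y)`. -/
def EgdStepSpec (R : Set Val) (d σn σn1 : Dep) (g : Val → Val) (p : Val × Val) : Prop :=
  ∃ (S : Rel) (x y : Val) (f : Val → Val),
    d = Dep.egd R S x y ∧ EgdAppF R S x y (pr1 σn) f ∧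
    p = (f x, f y) ∧ g = mergeVal (f x) (f y) ∧ σn1 = applyVal R g σn

/-- One application of the tgd rule of the chase at position `n` of the history `hist`:
    all (essentially distinct) applicable valuations are simultaneously given distinct
    extensions whose new values are fresh and greater than every value occurring in
    `σ_0, …, σ_n`. -/
def TgdStepSpec (R : Set Val) (d : Dep) (hist : ℕ → Dep) (n : ℕ) : Prop :=
  ∃ S S' : Rel, d = Dep.tgd R S S' ∧
    (∃ f, TgdAppF R S S' (pr1 (hist n)) f) ∧
    ∃ ext : (Val → Val) → (Val → Val),
      (∀ f, TgdAppF R S S' (pr1 (hist n)) f → ∀ v ∈ valsOf R S, ext f v = f v) ∧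
      (∀ f f', TgdAppF R S S' (pr1 (hist n)) f → TgdAppF R S S' (pr1 (hist n)) f' →
        (∀ v ∈ valsOf R S, f v = f' v) → ∀ v ∈ valsOf R S', ext f v = ext f' v) ∧
      (∀ f, TgdAppF R S S' (pr1 (hist n)) f → ∀ v ∈ valsOf R S' \ valsOf R S,
        ∀ i ≤ n, ∀ w ∈ depVals R (hist i), w < ext f v) ∧
      (∀ f f', TgdAppF R S S' (pr1 (hist n)) f → TgdAppF R S S' (pr1 (hist n)) f' →
        ∀ v ∈ valsOf R S' \ valsOf R S, ∀ w ∈ valsOf R S' \ valsOf R S,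
          ext f v = ext f' w → v = w ∧ ∀ z ∈ valsOf R S, f z = f' z) ∧
      hist (n + 1) = withPr1 (hist n)
        (pr1 (hist n) ∪ {t | ∃ f, TgdAppF R S S' (pr1 (hist n)) f ∧
          ∃ s' ∈ S', t = restrictT R (ext f ∘ s')})

/-- A chasing sequence of `s0` over `Σ` (over the attribute set `R`): `seq` is the
    sequence `σ_0, σ_1, …`; `used n` records which dependency (if any) is applied at step
    `n` (`none` is allowed only when no dependency is applicable, the sequence then being
    constant from that point on); `gv n` is the merging valuation of an egd step (and `id`
    otherwise); `ep n` is the pair `(f x, f y)` of an egd step. An applied egd is applied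
    repeatedly until no longer applicable, and no dependency applicable infinitely often
    is starved. -/
structure ChaseSeq (R : Set Val) (Sg : Set Dep) (s0 : Dep) where
  seq : ℕ → Dep
  used : ℕ → Option Dep
  gv : ℕ → Val → Val
  ep : ℕ → Val × Val
  init : seq 0 = s0
  stepNone : ∀ n, used n = none →
    (∀ d ∈ Sg, ¬ Applicable R d (pr1 (seq n))) ∧ seq (n + 1) = seq n ∧ gv n = id
  stepSome : ∀ n d, used n = some d → d ∈ Sg ∧
    (EgdStepSpec R d (seq n) (seq (n + 1)) (gv n) (ep n) ∨
      (TgdStepSpec R d seq n ∧ gv n = id))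
  egdRepeat : ∀ n d, used n = some d → Dep.isEgd d →
    Applicable R d (pr1 (seq (n + 1))) → used (n + 1) = some d
  fair : ∀ d ∈ Sg, (∀ m, ∃ n, m ≤ n ∧ Applicable R d (pr1 (seq n))) →
    ∀ m, ∃ n, m ≤ n ∧ used n = some d

/-- The descending valuations `ρ_n` associated with a chasing sequence. -/
def ChaseSeq.rho {R : Set Val} {Sg : Set Dep} {s0 : Dep} (C : ChaseSeq R Sg s0) :
    ℕ → Val → Val
  | 0 => id
  | n + 1 => C.gv n ∘ C.rho n

/-- Eventual value of a sequence of values (defaulting to `0` if it does not stabilize). -/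
noncomputable def evVal (g : ℕ → Val) : Val :=
  if h : ∃ m, ∀ n, m ≤ n → g n = g m then g h.choose else 0

/-- `ρ(x) = lim_n ρ_n(x)`. -/
noncomputable def ChaseSeq.rhoLim {R : Set Val} {Sg : Set Dep} {s0 : Dep}
    (C : ChaseSeq R Sg s0) : Val → Val :=
  fun v => evVal fun n => C.rho n v

/-- `T¹ = {u : ∃m ∀n ≥ m, u ∈ pr_1(σ_n)}`. -/
def chaseLim1 {R : Set Val} {Sg : Set Dep} {s0 : Dep} (C : ChaseSeq R Sg s0) : Rel :=
  {t | ∃ m, ∀ n, m ≤ n → t ∈ pr1 (C.seq n)}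

/-- `T² = {u : ∃m ∀n ≥ m, u ∈ pr_2(σ_n)}`. -/
def chaseLim2 {R : Set Val} {Sg : Set Dep} {s0 : Dep} (C : ChaseSeq R Sg s0) : Rel :=
  {t | ∃ m, ∀ n, m ≤ n → t ∈ pr2T (C.seq n)}

/-- The chase result `chase∞(Σ, σ)`. -/
noncomputable def ChaseSeq.result {R : Set Val} {Sg : Set Dep} {s0 : Dep}
    (C : ChaseSeq R Sg s0) : Dep :=
  match s0 with
  | .egd R0 _ _ _ => .egd R0 (chaseLim1 C)
      (evVal fun n => eqFst (C.seq n)) (evVal fun n => eqSnd (C.seq n))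
  | .tgd R0 _ _ => .tgd R0 (chaseLim1 C) (chaseLim2 C)
  | .ind A B => .ind A B

/-- A trivial dependency: an egd `(T, x = x)`, or a tgd `(T, T')` such that some
    valuation on `Val(T')` that is the identity on `Val(T) ∩ Val(T')` embeds `T'` into `T`. -/
def TrivialDep (R : Set Val) : Dep → Prop
  | .egd _ _ x y => x = y
  | .tgd _ T T' => ∃ f : Val → Val, (∀ v ∈ valsOf R T ∩ valsOf R T', f v = v) ∧
      ∀ t' ∈ T', restrictT R (f ∘ t') ∈ restrictR R T
  | .ind _ _ => False

/-! ### Auxiliary development for the proof -/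

section Aux

lemma restrictT_idem (R : Set Val) (t : Tuple) :
    restrictT R (restrictT R t) = restrictT R t := by
  funext a; by_cases h : a ∈ R <;> simp [restrictT, h]

lemma restrictT_congr {R : Set Val} {t u : Tuple} (h : ∀ a ∈ R, t a = u a) :
    restrictT R t = restrictT R u := by
  funext a; by_cases ha : a ∈ R <;> simp [restrictT, ha, h]

lemma restrictT_apply_mem {R : Set Val} {a : Val} (ha : a ∈ R) (t : Tuple) :
    restrictT R t a = t a := by simp [restrictT, ha]

lemma mem_restrictR_of_canon {R : Set Val} {r : Rel} {t : Tuple}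
    (ht : t ∈ r) (hc : restrictT R t = t) : t ∈ restrictR R r :=
  ⟨t, ht, hc⟩

/-- Eventual-stabilization spec for `evVal`. -/
lemma evVal_spec {g : ℕ → Val} (h : ∃ m, ∀ n, m ≤ n → g n = g m) :
    ∃ m, ∀ n, m ≤ n → g n = evVal g := by
  refine ⟨h.choose, fun n hn => ?_⟩
  rw [evVal, dif_pos h]; exact h.choose_spec n hn

lemma evVal_const {g : ℕ → Val} {c : Val} (h : ∀ n, g n = c) : evVal g = c := by
  have hex : ∃ m, ∀ n, m ≤ n → g n = g m := ⟨0, fun n _ => by rw [h, h]⟩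
  rw [evVal, dif_pos hex, h]

/-- An antitone sequence of naturals stabilizes. -/
lemma nat_anti_stab (g : ℕ → ℕ) (h : ∀ n, g (n + 1) ≤ g n) :
    ∃ m, ∀ n, m ≤ n → g n = g m := by
  have anti : ∀ a b, a ≤ b → g b ≤ g a := by
    intro a b hab
    induction b, hab using Nat.le_induction with
    | base => exact le_refl _
    | succ n hn ih => exact le_trans (h n) ih
  obtain ⟨c, ⟨n₀, rfl⟩, hmin⟩ :=
    (Nat.lt_wfRel.wf).has_min (Set.range g) ⟨g 0, 0, rfl⟩
  refine ⟨n₀, fun n hn => ?_⟩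
  have h1 : g n ≤ g n₀ := anti _ _ hn
  have h2 : ¬ g n < g n₀ := hmin (g n) ⟨n, rfl⟩
  omega

/-- Uniformization over a finite set. -/
lemma exists_uniform {α : Type*} {V : Set α} (hV : V.Finite) (Q : α → ℕ → Prop)
    (h : ∀ v ∈ V, ∃ m, ∀ k, m ≤ k → Q v k) :
    ∃ M, ∀ v ∈ V, ∀ k, M ≤ k → Q v k := by
  classical
  set m : α → ℕ := fun v => if hv : v ∈ V then (h v hv).choose else 0 with hm
  refine ⟨hV.toFinset.sup m, fun v hv k hk => ?_⟩
  have h1 : m v ≤ hV.toFinset.sup m := Finset.le_sup (hV.mem_toFinset.2 hv)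
  have h2 : m v = (h v hv).choose := by simp [hm, hv]
  exact (h v hv).choose_spec k (le_trans (h2 ▸ h1) hk)

lemma valsOf_finite {R : Set Val} {T : Rel} (hR : R.Finite) (hT : T.Finite) :
    (valsOf R T).Finite := by
  have : valsOf R T ⊆ (fun p : Tuple × Val => p.1 p.2) '' (T ×ˢ R) := by
    rintro v ⟨t, ht, a, ha, rfl⟩; exact ⟨(t, a), ⟨ht, ha⟩, rfl⟩
  exact ((hT.prod hR).image _).subset this

lemma valsOf_union (R : Set Val) (A B : Rel) :
    valsOf R (A ∪ B) = valsOf R A ∪ valsOf R B := by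
  ext v; constructor
  · rintro ⟨t, ht | ht, a, ha, rfl⟩
    · exact Or.inl ⟨t, ht, a, ha, rfl⟩
    · exact Or.inr ⟨t, ht, a, ha, rfl⟩
  · rintro (⟨t, ht, a, ha, rfl⟩ | ⟨t, ht, a, ha, rfl⟩)
    · exact ⟨t, Or.inl ht, a, ha, rfl⟩
    · exact ⟨t, Or.inr ht, a, ha, rfl⟩

lemma valsOf_mapRel_subset (R : Set Val) (g : Val → Val) (T : Rel) :
    valsOf R (mapRel R g T) ⊆ g '' valsOf R T := by
  rintro v ⟨t, ⟨w, hw, rfl⟩, a, ha, rfl⟩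
  refine ⟨w a, ⟨w, hw, a, ha, rfl⟩, ?_⟩
  show g (w a) = restrictT R (g ∘ w) a
  rw [restrictT_apply_mem ha]; rfl

lemma mem_valsOf {R : Set Val} {T : Rel} {t : Tuple} {a : Val} (ht : t ∈ T) (ha : a ∈ R) :
    t a ∈ valsOf R T := ⟨t, ht, a, ha, rfl⟩

lemma mapRel_comp (R : Set Val) (g h : Val → Val) (T : Rel) :
    mapRel R g (mapRel R h T) = mapRel R (g ∘ h) T := by
  ext t; constructor
  · rintro ⟨u, ⟨w, hw, rfl⟩, rfl⟩
    exact ⟨w, hw, restrictT_congr fun a ha => by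
      simp [Function.comp, restrictT_apply_mem ha]⟩
  · rintro ⟨w, hw, rfl⟩
    exact ⟨restrictT R (h ∘ w), ⟨w, hw, rfl⟩, restrictT_congr fun a ha => by
      simp [Function.comp, restrictT_apply_mem ha]⟩

lemma mapRel_congr {R : Set Val} {g h : Val → Val} (T : Rel)
    (hgh : ∀ v ∈ valsOf R T, g v = h v) : mapRel R g T = mapRel R h T := by
  unfold mapRel
  apply Set.image_congr
  intro t ht
  exact restrictT_congr fun a ha => hgh (t a) (mem_valsOf ht ha)

lemma mapRel_id_of_canon {R : Set Val} {T : Rel} (h : restrictR R T = T) :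
    mapRel R id T = T := by
  have : mapRel R id T = restrictR R T := rfl
  rw [this, h]

/-- values of a merge-valuation. -/
lemma mergeVal_cases (p q v : Val) : mergeVal p q v = v ∨ mergeVal p q v = min p q := by
  unfold mergeVal; split <;> simp

lemma mergeVal_le (p q v : Val) : mergeVal p q v ≤ v := by
  unfold mergeVal; split
  · rename_i h; rw [h]; exact min_le_max
  · exact le_refl _

lemma mergeVal_ne_max {p q : Val} (hpq : p ≠ q) (v : Val) : mergeVal p q v ≠ max p q := by
  unfold mergeVal; split
  · exact (min_lt_max.2 hpq).ne
  · assumption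

lemma mergeVal_eq_of_ne_max {p q v : Val} (h : v ≠ max p q) : mergeVal p q v = v := by
  unfold mergeVal; split
  · exact absurd (by assumption) h
  · rfl

/-- `e` is an ind. -/
def Dep.isInd : Dep → Prop
  | .ind _ _ => True
  | _ => False

lemma pr1_applyVal (R : Set Val) (g : Val → Val) (e : Dep) :
    pr1 (applyVal R g e) = mapRel R g (pr1 e) := by
  cases e <;> simp [pr1, applyVal, mapRel]

lemma pr2T_applyVal (R : Set Val) (g : Val → Val) (e : Dep) :
    pr2T (applyVal R g e) = mapRel R g (pr2T e) := by
  cases e <;> simp [pr2T, applyVal, mapRel]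

lemma pr1_withPr1 {e : Dep} (he : ¬ e.isInd) (T : Rel) : pr1 (withPr1 e T) = T := by
  cases e <;> simp [withPr1, pr1] <;> exact absurd trivial he

end Aux


section ChaseDev

variable {R : Set Val} {Sg : Set Dep} {s : Dep}

lemma embeds_val {f : Val → Val} {T r : Rel} (h : Embeds R f T r) {v : Val}
    (hv : v ∈ valsOf R T) : f v ∈ valsOf R r := by
  obtain ⟨t, ht, a, ha, rfl⟩ := hv
  obtain ⟨w, hw, hwe⟩ := h t ht
  have h1 : w a = f (t a) := by
    have := congrFun hwe a
    simpa [restrictT, ha] using this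
  exact h1 ▸ mem_valsOf hw ha

lemma wf_pr1_canon (hs : Dep.wf R s) : restrictR R (pr1 s) = pr1 s := by
  cases s with
  | egd R0 T x y => exact hs.2.2.1
  | tgd R0 T T' => exact hs.2.2.2.1
  | ind A B => exact (hs : False).elim

lemma wf_pr1_fin (hs : Dep.wf R s) : (pr1 s).Finite := by
  cases s with
  | egd R0 T x y => exact hs.2.1
  | tgd R0 T T' => exact hs.2.1
  | ind A B => exact (hs : False).elim

lemma egdSpec_facts (hwf : ∀ d ∈ Sg, Dep.wf R d) {d σn σn1 : Dep} {g : Val → Val}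
    {p : Val × Val} (hd : d ∈ Sg) (h : EgdStepSpec R d σn σn1 g p) :
    σn1 = applyVal R g σn ∧
      ∃ a b : Val, a ≠ b ∧ g = mergeVal a b ∧
        a ∈ valsOf R (pr1 σn) ∧ b ∈ valsOf R (pr1 σn) := by
  obtain ⟨S, x, y, f, rfl, ⟨hemb, hne⟩, -, hg, hs1⟩ := h
  obtain ⟨-, -, -, hx, hy⟩ := hwf _ hd
  exact ⟨hs1, f x, f y, hne, hg, embeds_val hemb hx, embeds_val hemb hy⟩

variable (C : ChaseSeq R Sg s)

/-- Master case analysis for one chase step. -/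
lemma step_cases (hwf : ∀ d ∈ Sg, Dep.wf R d) (n : ℕ) :
    (C.seq (n + 1) = applyVal R (C.gv n) (C.seq n) ∧
      ∃ a b : Val, a ≠ b ∧ C.gv n = mergeVal a b ∧
        a ∈ valsOf R (pr1 (C.seq n)) ∧ b ∈ valsOf R (pr1 (C.seq n))) ∨
    (C.gv n = id ∧ (C.seq (n + 1) = C.seq n ∨
      ∃ d ∈ Sg, TgdStepSpec R d C.seq n)) := by
  cases h : C.used n with
  | none =>
      obtain ⟨-, h1, h2⟩ := C.stepNone n h
      exact Or.inr ⟨h2, Or.inl h1⟩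
  | some d =>
      obtain ⟨hd, hspec⟩ := C.stepSome n d h
      rcases hspec with he | ⟨ht, hid⟩
      · exact Or.inl (egdSpec_facts hwf hd he)
      · exact Or.inr ⟨hid, Or.inr ⟨d, hd, ht⟩⟩

lemma applyVal_notInd {g : Val → Val} {e : Dep} (h : ¬ e.isInd) :
    ¬ (applyVal R g e).isInd := by
  cases e <;> simpa [applyVal, Dep.isInd] using h

lemma withPr1_notInd {e : Dep} {T : Rel} (h : ¬ e.isInd) : ¬ (withPr1 e T).isInd := by
  cases e <;> simpa [withPr1, Dep.isInd] using h

lemma seq_notInd (hs : Dep.wf R s) (hwf : ∀ d ∈ Sg, Dep.wf R d) :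
    ∀ n, ¬ (C.seq n).isInd := by
  intro n
  induction n with
  | zero =>
      rw [C.init]
      cases s with
      | egd _ _ _ _ => simp [Dep.isInd]
      | tgd _ _ _ => simp [Dep.isInd]
      | ind _ _ => exact (hs : False).elim
  | succ n ih =>
      rcases step_cases C hwf n with ⟨h1, -⟩ | ⟨-, h1 | ⟨d, hd, S, S', hdeq, -, ext, -, -, -, -, hist⟩⟩
      · rw [h1]; exact applyVal_notInd ih
      · rw [h1]; exact ih
      · rw [hist]; exact withPr1_notInd ih

lemma canon (hs : Dep.wf R s) (hwf : ∀ d ∈ Sg, Dep.wf R d) :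
    ∀ n, ∀ t ∈ pr1 (C.seq n), restrictT R t = t := by
  intro n
  induction n with
  | zero =>
      intro t ht
      rw [C.init] at ht
      rw [← wf_pr1_canon hs] at ht
      obtain ⟨w, -, rfl⟩ := ht
      exact restrictT_idem R w
  | succ n ih =>
      intro t ht
      rcases step_cases C hwf n with ⟨h1, -⟩ | ⟨-, h1 | ⟨d, hd, S, S', hdeq, -, ext, -, -, -, -, hist⟩⟩
      · rw [h1, pr1_applyVal] at ht
        obtain ⟨w, -, rfl⟩ := ht
        exact restrictT_idem R _
      · rw [h1] at ht; exact ih t ht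
      · rw [hist, pr1_withPr1 (seq_notInd C hs hwf n)] at ht
        rcases ht with ht | ⟨f, -, s', -, rfl⟩
        · exact ih t ht
        · exact restrictT_idem R _

lemma succ_pr1 (hs : Dep.wf R s) (hwf : ∀ d ∈ Sg, Dep.wf R d) (n : ℕ) {t : Tuple}
    (ht : t ∈ pr1 (C.seq n)) : restrictT R (C.gv n ∘ t) ∈ pr1 (C.seq (n + 1)) := by
  rcases step_cases C hwf n with ⟨h1, -⟩ | ⟨hid, h1 | ⟨d, hd, S, S', hdeq, -, ext, -, -, -, -, hist⟩⟩
  · rw [h1, pr1_applyVal]; exact ⟨t, ht, rfl⟩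
  · rw [h1, hid]
    have : restrictT R (id ∘ t) = t := by
      rw [show id ∘ t = t from rfl]; exact canon C hs hwf n t ht
    rw [this]; exact ht
  · rw [hist, pr1_withPr1 (seq_notInd C hs hwf n), hid]
    have : restrictT R (id ∘ t) = t := by
      rw [show id ∘ t = t from rfl]; exact canon C hs hwf n t ht
    rw [this]; exact Or.inl ht

lemma gv_le (hwf : ∀ d ∈ Sg, Dep.wf R d) (n : ℕ) (v : Val) : C.gv n v ≤ v := by
  rcases step_cases C hwf n with ⟨-, a, b, -, hg, -⟩ | ⟨hid, -⟩
  · rw [hg]; exact mergeVal_le a b v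
  · rw [hid]; exact le_refl v

end ChaseDev


/-- Composite valuation `gv (n+k-1) ∘ ⋯ ∘ gv n`. -/
def phiC {R : Set Val} {Sg : Set Dep} {s : Dep} (C : ChaseSeq R Sg s) (n : ℕ) :
    ℕ → Val → Val
  | 0 => id
  | k + 1 => C.gv (n + k) ∘ phiC C n k

/-- The limit valuation `ρ̂ₙ`. -/
noncomputable def rhoC {R : Set Val} {Sg : Set Dep} {s : Dep} (C : ChaseSeq R Sg s)
    (n : ℕ) : Val → Val :=
  fun v => evVal fun k => phiC C n k v

section ChaseDev2

variable {R : Set Val} {Sg : Set Dep} {s : Dep} (C : ChaseSeq R Sg s)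

lemma phiC_stab (hwf : ∀ d ∈ Sg, Dep.wf R d) (n : ℕ) (v : Val) :
    ∃ m, ∀ k, m ≤ k → phiC C n k v = rhoC C n v := by
  apply evVal_spec
  apply nat_anti_stab
  intro k
  exact gv_le C hwf (n + k) (phiC C n k v)

lemma rhoC_fix_of (hwf : ∀ d ∈ Sg, Dep.wf R d) {v : Val} {m : ℕ}
    (hfix : ∀ k, m ≤ k → C.gv k v = v) : ∀ n, m ≤ n → rhoC C n v = v := by
  intro n hn
  have hphi : ∀ k, phiC C n k v = v := by
    intro k
    induction k with
    | zero => rfl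
    | succ k ih =>
        show C.gv (n + k) (phiC C n k v) = v
        rw [ih]; exact hfix (n + k) (le_trans hn (Nat.le_add_right n k))
  exact evVal_const hphi

lemma push (hs : Dep.wf R s) (hwf : ∀ d ∈ Sg, Dep.wf R d) (n : ℕ) {t : Tuple}
    (ht : t ∈ pr1 (C.seq n)) :
    ∀ k, restrictT R (phiC C n k ∘ t) ∈ pr1 (C.seq (n + k)) := by
  intro k
  induction k with
  | zero =>
      have : restrictT R (phiC C n 0 ∘ t) = t := canon C hs hwf n t ht
      rw [this]; exact ht
  | succ k ih =>
      have h2 := succ_pr1 C hs hwf (n + k) ih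
      have h3 : restrictT R (C.gv (n + k) ∘ restrictT R (phiC C n k ∘ t)) =
          restrictT R (phiC C n (k + 1) ∘ t) := by
        apply restrictT_congr
        intro a ha
        show C.gv (n + k) (restrictT R (phiC C n k ∘ t) a) = phiC C n (k + 1) (t a)
        rw [restrictT_apply_mem ha]
        rfl
      rw [h3] at h2
      exact h2

lemma pushLim (hR : R.Finite) (hs : Dep.wf R s) (hwf : ∀ d ∈ Sg, Dep.wf R d) (n : ℕ)
    {t : Tuple} (ht : t ∈ pr1 (C.seq n)) :
    restrictT R (rhoC C n ∘ t) ∈ chaseLim1 C := by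
  obtain ⟨M, hM⟩ := exists_uniform (hR.image t)
    (fun v k => phiC C n k v = rhoC C n v)
    (fun v _ => phiC_stab C hwf n v)
  refine ⟨n + M, fun N hN => ?_⟩
  have hk : M ≤ N - n := by omega
  have hNn : n + (N - n) = N := by omega
  have h1 := push C hs hwf n ht (N - n)
  rw [hNn] at h1
  have h2 : restrictT R (phiC C n (N - n) ∘ t) = restrictT R (rhoC C n ∘ t) := by
    apply restrictT_congr
    intro a ha
    exact hM (t a) ⟨a, ha, rfl⟩ (N - n) hk
  rw [h2] at h1
  exact h1

lemma stab_val (hwf : ∀ d ∈ Sg, Dep.wf R d) {u : Tuple} {m : ℕ}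
    (hu : ∀ N, m ≤ N → u ∈ pr1 (C.seq N)) {a : Val} (ha : a ∈ R) :
    ∀ k, m ≤ k → C.gv k (u a) = u a := by
  intro k hk
  rcases step_cases C hwf k with ⟨h1, p, q, hpq, hg, -, -⟩ | ⟨hid, -⟩
  · have hu1 : u ∈ pr1 (C.seq (k + 1)) := hu (k + 1) (le_trans hk (Nat.le_succ k))
    rw [h1, pr1_applyVal] at hu1
    obtain ⟨w, -, hw⟩ := hu1
    have hua : u a = C.gv k (w a) := by
      have := congrFun hw a
      simp only [restrictT, ha, if_true] at this
      exact this.symm ▸ rfl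
    have hne : u a ≠ max p q := by
      rw [hua, hg]; exact mergeVal_ne_max hpq _
    rw [hg]; exact mergeVal_eq_of_ne_max hne
  · rw [hid]; rfl

lemma lim_canon (hs : Dep.wf R s) (hwf : ∀ d ∈ Sg, Dep.wf R d) {t : Tuple}
    (ht : t ∈ chaseLim1 C) : restrictT R t = t := by
  obtain ⟨m, hm⟩ := ht
  exact canon C hs hwf m t (hm m (le_refl m))

lemma embeds_stage {f : Val → Val} {X : Rel} (hX : X.Finite)
    (h : Embeds R f X (chaseLim1 C)) :
    ∃ m, ∀ n, m ≤ n → Embeds R f X (pr1 (C.seq n)) := by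
  obtain ⟨M, hM⟩ := exists_uniform hX
    (fun t n => restrictT R (f ∘ t) ∈ restrictR R (pr1 (C.seq n)))
    (by
      intro t ht
      obtain ⟨u, ⟨m, hm⟩, he⟩ := h t ht
      exact ⟨m, fun k hk => ⟨u, hm k hk, he⟩⟩)
  exact ⟨M, fun n hn t ht => hM t ht n hn⟩

lemma embeds_lim_fix (hR : R.Finite) (hwf : ∀ d ∈ Sg, Dep.wf R d) {f : Val → Val}
    {X : Rel} (hXfin : X.Finite) (h : Embeds R f X (chaseLim1 C)) :
    ∃ M, ∀ n, M ≤ n → ∀ v ∈ valsOf R X, rhoC C n (f v) = f v := by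
  obtain ⟨M, hM⟩ := exists_uniform (valsOf_finite hR hXfin)
    (fun v n => rhoC C n (f v) = f v)
    (by
      rintro v ⟨t, ht, a, ha, rfl⟩
      obtain ⟨u, hu, he⟩ := h t ht
      obtain ⟨m, hm⟩ := hu
      have hua : u a = f (t a) := by
        have := congrFun he a
        simpa [restrictT, ha] using this
      have hfix := stab_val C hwf hm ha
      rw [hua] at hfix
      exact ⟨m, fun n hn => rhoC_fix_of C hwf hfix n hn⟩)
  exact ⟨M, fun n hn v hv => hM v hv n hn⟩

end ChaseDev2


section ChaseDev3

variable {R : Set Val} {Sg : Set Dep} {s : Dep}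

/-- Values added by a simultaneous tgd step form a finite set. -/
lemma newset_vals_finite (hR : R.Finite) {S S' T : Rel} (hSfin : S.Finite)
    (hS'fin : S'.Finite) (hT : (valsOf R T).Finite)
    {ext : (Val → Val) → (Val → Val)}
    (hcong : ∀ f f', TgdAppF R S S' T f → TgdAppF R S S' T f' →
      (∀ v ∈ valsOf R S, f v = f' v) → ∀ v ∈ valsOf R S', ext f v = ext f' v) :
    (valsOf R {t | ∃ f, TgdAppF R S S' T f ∧
      ∃ s' ∈ S', t = restrictT R (ext f ∘ s')}).Finite := by
  classical
  set VS := valsOf R S with hVS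
  have hVSfin : VS.Finite := valsOf_finite hR hSfin
  set W := valsOf R T with hW
  -- the set of values produced by some `ext f`
  set E := {w : Val | ∃ f, TgdAppF R S S' T f ∧ ∃ v ∈ valsOf R S', w = ext f v} with hE
  have hsub : valsOf R {t | ∃ f, TgdAppF R S S' T f ∧
      ∃ s' ∈ S', t = restrictT R (ext f ∘ s')} ⊆ E := by
    rintro w ⟨t, ⟨f, hf, s', hs', rfl⟩, a, ha, rfl⟩
    refine ⟨f, hf, s' a, mem_valsOf hs' ha, ?_⟩
    rw [restrictT_apply_mem ha]; rfl
  refine Set.Finite.subset ?_ hsub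
  -- restriction of a valuation to `VS`
  set res : (Val → Val) → (Val → Val) := fun f z => if z ∈ VS then f z else 0 with hres
  set Phi : Set (Val → Val) :=
    {h | (∀ z, z ∈ VS → h z ∈ W) ∧ ∀ z, z ∉ VS → h z = 0} with hPhi
  have hresPhi : ∀ f, TgdAppF R S S' T f → res f ∈ Phi := by
    intro f hf
    constructor
    · intro z hz
      simp only [hres, if_pos hz]
      exact embeds_val hf.1 hz
    · intro z hz; simp only [hres, if_neg hz]
  have hPhiFin : Phi.Finite := by
    have hinj : Set.InjOn (fun (h : Val → Val) (z : hVSfin.toFinset) => h z) Phi := by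
      intro h1 hh1 h2 hh2 heq
      funext z
      by_cases hz : z ∈ VS
      · exact congrFun heq ⟨z, hVSfin.mem_toFinset.2 hz⟩
      · rw [hh1.2 z hz, hh2.2 z hz]
    have himg : (fun (h : Val → Val) (z : hVSfin.toFinset) => h z) '' Phi ⊆
        Set.pi Set.univ (fun _ : hVSfin.toFinset => insert 0 W) := by
      rintro g ⟨h, hh, rfl⟩ z -
      show h (z : Val) ∈ insert 0 W
      by_cases hz : (z : Val) ∈ VS
      · exact Set.mem_insert_of_mem _ (hh.1 z hz)
      · rw [hh.2 z hz]; exact Set.mem_insert _ _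
    exact Set.Finite.of_finite_image
      ((Set.Finite.pi (fun _ => hT.insert 0)).subset himg) hinj
  -- choose a representative for each restriction
  set pick : (Val → Val) → (Val → Val) := fun h =>
    if hh : ∃ f, TgdAppF R S S' T f ∧ res f = h then hh.choose else id with hpick
  have key : ∀ f, TgdAppF R S S' T f → ∀ v ∈ valsOf R S',
      ext f v = ext (pick (res f)) v := by
    intro f hf v hv
    have hh : ∃ f', TgdAppF R S S' T f' ∧ res f' = res f := ⟨f, hf, rfl⟩
    have hspec := hh.choose_spec
    simp only [hpick, dif_pos hh]
    refine hcong f hh.choose hf hspec.1 ?_ v hv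
    intro z hz
    have := congrFun hspec.2 z
    simp only [hres, if_pos hz] at this
    exact this.symm
  have hEsub : E ⊆ (fun p : (Val → Val) × Val => ext (pick p.1) p.2) ''
      ((res '' {f | TgdAppF R S S' T f}) ×ˢ valsOf R S') := by
    rintro w ⟨f, hf, v, hv, rfl⟩
    exact ⟨(res f, v), ⟨⟨f, hf, rfl⟩, hv⟩, (key f hf v hv).symm⟩
  refine Set.Finite.subset (Set.Finite.image _ ?_) hEsub
  exact Set.Finite.prod
    (hPhiFin.subset (by rintro h ⟨f, hf, rfl⟩; exact hresPhi f hf))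
    (valsOf_finite hR hS'fin)

variable (C : ChaseSeq R Sg s)

lemma vals_fin (hR : R.Finite) (hs : Dep.wf R s) (hwf : ∀ d ∈ Sg, Dep.wf R d) :
    ∀ n, (valsOf R (pr1 (C.seq n))).Finite := by
  intro n
  induction n with
  | zero =>
      rw [C.init]
      exact valsOf_finite hR (wf_pr1_fin hs)
  | succ n ih =>
      rcases step_cases C hwf n with ⟨h1, -⟩ |
        ⟨hid, h1 | ⟨d, hd, S, S', hdeq, -, ext, -, hc2, -, -, hist⟩⟩
      · rw [h1, pr1_applyVal]
        exact (ih.image (C.gv n)).subset (valsOf_mapRel_subset R (C.gv n) _)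
      · rw [h1]; exact ih
      · rw [hist, pr1_withPr1 (seq_notInd C hs hwf n), valsOf_union]
        refine ih.union ?_
        have hwfd := hwf d hd
        rw [hdeq] at hwfd
        exact newset_vals_finite hR hwfd.2.1 hwfd.2.2.1 ih hc2

end ChaseDev3


section ChaseDev4

variable {R : Set Val} {Sg : Set Dep} {s : Dep} (C : ChaseSeq R Sg s)

/-- The chase limit satisfies every egd of `Σ`. -/
lemma sat_egd (hR : R.Finite) (hs : Dep.wf R s) (hwf : ∀ d ∈ Sg, Dep.wf R d)
    {S : Rel} {x y : Val} (hd : Dep.egd R S x y ∈ Sg) :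
    egdSat R S x y (chaseLim1 C) := by
  intro f hemb
  by_contra hne
  have hwfd := hwf _ hd
  obtain ⟨-, hSfin, -, -, -⟩ := hwfd
  obtain ⟨m, hm⟩ := embeds_stage C hSfin hemb
  -- the egd is applicable from `m` on
  have happ : ∀ n, m ≤ n → Applicable R (Dep.egd R S x y) (pr1 (C.seq n)) :=
    fun n hn => ⟨f, hm n hn, hne⟩
  obtain ⟨n₀, hn₀, hused₀⟩ := C.fair _ hd
    (fun m' => ⟨max m' m, le_max_left _ _, happ _ (le_max_right _ _)⟩) m
  -- from `n₀` on, the egd is used at every step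
  have hallused : ∀ k, C.used (n₀ + k) = some (Dep.egd R S x y) := by
    intro k
    induction k with
    | zero => exact hused₀
    | succ k ih =>
        have : n₀ + k + 1 = n₀ + (k + 1) := by omega
        rw [← this]
        exact C.egdRepeat (n₀ + k) _ ih trivial (happ _ (by omega))
  -- every such step strictly shrinks the finite set of values
  have hstep : ∀ k, valsOf R (pr1 (C.seq (n₀ + k + 1))) ⊂
      valsOf R (pr1 (C.seq (n₀ + k))) := by
    intro k
    obtain ⟨-, hspec⟩ := C.stepSome (n₀ + k) _ (hallused k)
    rcases hspec with he | ⟨ht, -⟩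
    · obtain ⟨h1, p, q, hpq, hg, hp, hq⟩ := egdSpec_facts hwf hd he
      constructor
      · intro v hv
        rw [h1, pr1_applyVal] at hv
        obtain ⟨z, hz, rfl⟩ := (valsOf_mapRel_subset R _ _) hv
        rw [hg]
        rcases mergeVal_cases p q z with hc | hc
        · rw [hc]; exact hz
        · rw [hc]
          rcases min_cases p q with ⟨h', -⟩ | ⟨h', -⟩ <;> rw [h']
          · exact hp
          · exact hq
      · intro hsub
        have hmax : max p q ∈ valsOf R (pr1 (C.seq (n₀ + k))) := by
          rcases max_cases p q with ⟨h', -⟩ | ⟨h', -⟩ <;> rw [h']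
          · exact hp
          · exact hq
        have hmem := hsub hmax
        rw [h1, pr1_applyVal] at hmem
        obtain ⟨z, -, hz⟩ := (valsOf_mapRel_subset R _ _) hmem
        rw [hg] at hz
        exact mergeVal_ne_max hpq z hz
    · obtain ⟨S0, S0', hdeq, -⟩ := ht
      exact absurd hdeq (by simp)
  -- infinite descent on cardinality
  have hlt : ∀ k, (valsOf R (pr1 (C.seq (n₀ + k + 1)))).ncard <
      (valsOf R (pr1 (C.seq (n₀ + k)))).ncard :=
    fun k => Set.ncard_lt_ncard (hstep k) (vals_fin C hR hs hwf (n₀ + k))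
  have hdesc : ∀ k, (valsOf R (pr1 (C.seq (n₀ + k)))).ncard + k ≤
      (valsOf R (pr1 (C.seq n₀))).ncard := by
    intro k
    induction k with
    | zero => simp
    | succ k ih =>
        have h' := hlt k
        have e1 : n₀ + (k + 1) = n₀ + k + 1 := by omega
        rw [e1]
        omega
  have := hdesc ((valsOf R (pr1 (C.seq n₀))).ncard + 1)
  omega

/-- The chase limit satisfies every tgd of `Σ`. -/
lemma sat_tgd (hR : R.Finite) (hs : Dep.wf R s) (hwf : ∀ d ∈ Sg, Dep.wf R d)
    {S S' : Rel} (hd : Dep.tgd R S S' ∈ Sg) :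
    tgdSat R S S' (chaseLim1 C) := by
  intro f hemb
  have hwfd := hwf _ hd
  obtain ⟨-, hSfin, hS'fin, -, -⟩ := hwfd
  obtain ⟨m₁, hm₁⟩ := embeds_stage C hSfin hemb
  obtain ⟨M₂, hM₂⟩ := embeds_lim_fix C hR hwf hSfin hemb
  set M := max m₁ M₂ with hM
  by_cases hA : ∃ n, M ≤ n ∧ ¬ TgdAppF R S S' (pr1 (C.seq n)) f
  · -- an extension exists at some large stage; push it to the limit
    obtain ⟨n, hn, hnapp⟩ := hA
    have hEmb : Embeds R f S (pr1 (C.seq n)) := hm₁ n (le_trans (le_max_left _ _) hn)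
    have hex : ∃ g : Val → Val, (∀ v ∈ valsOf R S, g v = f v) ∧
        Embeds R g S' (pr1 (C.seq n)) := by
      by_contra hc
      exact hnapp ⟨hEmb, hc⟩
    obtain ⟨g₀, hg₀f, hg₀e⟩ := hex
    refine ⟨rhoC C n ∘ g₀, ?_, ?_⟩
    · rintro v ⟨hv, -⟩
      show rhoC C n (g₀ v) = f v
      rw [hg₀f v hv]
      exact hM₂ n (le_trans (le_max_right _ _) hn) v hv
    · intro t' ht'
      obtain ⟨w, hw, hwe⟩ := hg₀e t' ht'
      have h1 := pushLim C hR hs hwf n hw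
      have h2 : restrictT R ((rhoC C n ∘ g₀) ∘ t') = restrictT R (rhoC C n ∘ w) := by
        apply restrictT_congr
        intro a ha
        have : w a = g₀ (t' a) := by
          have := congrFun hwe a
          simpa [restrictT, ha] using this
        show rhoC C n (g₀ (t' a)) = rhoC C n (w a)
        rw [this]
      rw [h2]
      exact mem_restrictR_of_canon h1 (restrictT_idem R _)
  · -- the tgd stays applicable; fairness fires it
    push_neg at hA
    have hB : ∀ n, M ≤ n → TgdAppF R S S' (pr1 (C.seq n)) f := hA
    obtain ⟨n, hn, hused⟩ := C.fair _ hd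
      (fun m' => ⟨max m' M, le_max_left _ _, f, hB _ (le_max_right _ _)⟩) M
    obtain ⟨-, hspec⟩ := C.stepSome n _ hused
    rcases hspec with he | ⟨ht, -⟩
    · obtain ⟨S0, x0, y0, f0, hdeq, -⟩ := he
      exact absurd hdeq (by simp)
    · obtain ⟨S0, S0', hdeq, -, ext, hc1, -, -, -, hist⟩ := ht
      injection hdeq with h1 h2 h3
      rw [← h2, ← h3] at hc1 hist
      have happ : TgdAppF R S S' (pr1 (C.seq n)) f := hB n hn
      refine ⟨rhoC C (n + 1) ∘ ext f, ?_, ?_⟩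
      · rintro v ⟨hv, -⟩
        show rhoC C (n + 1) (ext f v) = f v
        rw [hc1 f happ v hv]
        exact hM₂ (n + 1) (le_trans (le_max_right _ _) (le_trans hn (Nat.le_succ n))) v hv
      · intro t' ht'
        have hmem : restrictT R (ext f ∘ t') ∈ pr1 (C.seq (n + 1)) := by
          rw [hist, pr1_withPr1 (seq_notInd C hs hwf n)]
          exact Or.inr ⟨f, happ, t', ht', rfl⟩
        have h1 := pushLim C hR hs hwf (n + 1) hmem
        have h2 : restrictT R (rhoC C (n + 1) ∘ restrictT R (ext f ∘ t')) =
            restrictT R ((rhoC C (n + 1) ∘ ext f) ∘ t') := by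
          apply restrictT_congr
          intro a ha
          show rhoC C (n + 1) (restrictT R (ext f ∘ t') a) = rhoC C (n + 1) (ext f (t' a))
          rw [restrictT_apply_mem ha]
          rfl
        rw [h2] at h1
        exact mem_restrictR_of_canon h1 (restrictT_idem R _)

/-- The chase limit satisfies every dependency of `Σ`. -/
lemma sat_all (hR : R.Finite) (hs : Dep.wf R s) (hwf : ∀ d ∈ Sg, Dep.wf R d) :
    ∀ d ∈ Sg, Dep.sat (chaseLim1 C) d := by
  intro d hd
  have hwfd := hwf d hd
  cases d with
  | egd R0 S x y =>
      obtain ⟨rfl, -⟩ := hwfd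
      exact sat_egd C hR hs hwf hd
  | tgd R0 S S' =>
      obtain ⟨rfl, -⟩ := hwfd
      exact sat_tgd C hR hs hwf hd
  | ind A B => exact (hwfd : False).elim

end ChaseDev4


section ChaseDev5

variable {R : Set Val} {Sg : Set Dep}

lemma egd_shape {R0 : Set Val} {T : Rel} {x y : Val}
    (C : ChaseSeq R Sg (Dep.egd R0 T x y)) (hwf : ∀ d ∈ Sg, Dep.wf R d) :
    ∀ n, ∃ Tn, C.seq n = Dep.egd R0 Tn (phiC C 0 n x) (phiC C 0 n y) := by
  intro n
  induction n with
  | zero => exact ⟨T, C.init⟩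
  | succ n ih =>
      obtain ⟨Tn, hTn⟩ := ih
      have hphi : phiC C 0 (n + 1) = C.gv n ∘ phiC C 0 n := by
        show C.gv (0 + n) ∘ _ = _
        rw [Nat.zero_add]
      rcases step_cases C hwf n with ⟨h1, -⟩ |
        ⟨hid, h1 | ⟨d, hd, S, S', hdeq, -, ext, -, -, -, -, hist⟩⟩
      · refine ⟨mapRel R (C.gv n) Tn, ?_⟩
        rw [h1, hTn, hphi]
        rfl
      · refine ⟨Tn, ?_⟩
        rw [h1, hTn, hphi, hid]
        rfl
      · refine ⟨pr1 (C.seq n) ∪ {t | ∃ f, TgdAppF R S S' (pr1 (C.seq n)) f ∧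
          ∃ s' ∈ S', t = restrictT R (ext f ∘ s')}, ?_⟩
        rw [hist, hphi, hid, hTn]
        rfl

lemma tgd_shape {R0 : Set Val} {T T' : Rel}
    (C : ChaseSeq R Sg (Dep.tgd R0 T T')) (hwf : ∀ d ∈ Sg, Dep.wf R d)
    (hT'c : restrictR R T' = T') :
    ∀ n, ∃ Tn, C.seq n = Dep.tgd R0 Tn (mapRel R (phiC C 0 n) T') := by
  intro n
  induction n with
  | zero =>
      refine ⟨T, ?_⟩
      rw [C.init]
      have : mapRel R (phiC C 0 0) T' = T' := mapRel_id_of_canon hT'c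
      rw [this]
  | succ n ih =>
      obtain ⟨Tn, hTn⟩ := ih
      have hphi : phiC C 0 (n + 1) = C.gv n ∘ phiC C 0 n := by
        show C.gv (0 + n) ∘ _ = _
        rw [Nat.zero_add]
      rcases step_cases C hwf n with ⟨h1, -⟩ |
        ⟨hid, h1 | ⟨d, hd, S, S', hdeq, -, ext, -, -, -, -, hist⟩⟩
      · refine ⟨mapRel R (C.gv n) Tn, ?_⟩
        rw [h1, hTn, hphi, ← mapRel_comp]
        rfl
      · refine ⟨Tn, ?_⟩
        rw [h1, hTn, hphi, hid]
        have : (id ∘ phiC C 0 n) = phiC C 0 n := rfl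
        rw [this]
      · refine ⟨pr1 (C.seq n) ∪ {t | ∃ f, TgdAppF R S S' (pr1 (C.seq n)) f ∧
          ∃ s' ∈ S', t = restrictT R (ext f ∘ s')}, ?_⟩
        rw [hist, hphi, hid, hTn]
        rfl

variable {s : Dep} (C : ChaseSeq R Sg s)

/-- Values never occurring in the chase tableau stay disjoint from it. -/
lemma bad_inv (hs : Dep.wf R s) (hwf : ∀ d ∈ Sg, Dep.wf R d) (Bad : Set Val)
    (hB0 : ∀ v ∈ valsOf R (pr1 s), v ∉ Bad) (hBd : Bad ⊆ depVals R s) :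
    ∀ n, ∀ v ∈ valsOf R (pr1 (C.seq n)), v ∉ Bad := by
  intro n
  induction n with
  | zero => rw [C.init]; exact hB0
  | succ n ih =>
      intro v hv
      rcases step_cases C hwf n with ⟨h1, p, q, hpq, hg, hp, hq⟩ |
        ⟨hid, h1 | ⟨d, hd, S, S', hdeq, -, ext, hc1, -, hc3, -, hist⟩⟩
      · rw [h1, pr1_applyVal] at hv
        obtain ⟨z, hz, rfl⟩ := (valsOf_mapRel_subset R _ _) hv
        rw [hg]
        rcases mergeVal_cases p q z with hc | hc
        · rw [hc]; exact ih z hz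
        · rw [hc]
          rcases min_cases p q with ⟨h', -⟩ | ⟨h', -⟩ <;> rw [h']
          · exact ih p hp
          · exact ih q hq
      · rw [h1] at hv; exact ih v hv
      · rw [hist, pr1_withPr1 (seq_notInd C hs hwf n), valsOf_union] at hv
        rcases hv with hv | hv
        · exact ih v hv
        · obtain ⟨t, ⟨f, hf, s', hs', rfl⟩, a, ha, rfl⟩ := hv
          rw [restrictT_apply_mem ha]
          show ext f (s' a) ∉ Bad
          by_cases hmem : s' a ∈ valsOf R S
          · rw [hc1 f hf (s' a) hmem]
            exact ih _ (embeds_val hf.1 hmem)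
          · intro hbad
            have hlt := hc3 f hf (s' a) ⟨mem_valsOf hs' ha, hmem⟩ 0 (Nat.zero_le n)
              (ext f (s' a)) (by rw [C.init]; exact hBd hbad)
            exact lt_irrefl _ hlt

lemma gv_fix_bad (hwf : ∀ d ∈ Sg, Dep.wf R d) (Bad : Set Val)
    (hinv : ∀ n, ∀ v ∈ valsOf R (pr1 (C.seq n)), v ∉ Bad) :
    ∀ n, ∀ v ∈ Bad, C.gv n v = v := by
  intro n v hv
  rcases step_cases C hwf n with ⟨-, p, q, hpq, hg, hp, hq⟩ | ⟨hid, -⟩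
  · have hmax : max p q ∉ Bad := by
      rcases max_cases p q with ⟨h', -⟩ | ⟨h', -⟩ <;> rw [h']
      · exact hinv n p hp
      · exact hinv n q hq
    rw [hg]
    exact mergeVal_eq_of_ne_max (fun h => hmax (h ▸ hv))
  · rw [hid]; rfl

lemma rho_fix_bad (hwf : ∀ d ∈ Sg, Dep.wf R d) (Bad : Set Val)
    (hinv : ∀ n, ∀ v ∈ valsOf R (pr1 (C.seq n)), v ∉ Bad) :
    ∀ n, ∀ v ∈ Bad, rhoC C n v = v := by
  intro n v hv
  exact rhoC_fix_of C hwf (fun k _ => gv_fix_bad C hwf Bad hinv k v hv) n (Nat.zero_le n)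

lemma rho_notbad (hwf : ∀ d ∈ Sg, Dep.wf R d) (Bad : Set Val)
    (hinv : ∀ n, ∀ v ∈ valsOf R (pr1 (C.seq n)), v ∉ Bad) :
    ∀ n, ∀ v, v ∉ Bad → rhoC C n v ∉ Bad := by
  intro n v hv
  have hphi : ∀ k, phiC C n k v ∉ Bad := by
    intro k
    induction k with
    | zero => exact hv
    | succ k ihk =>
        show C.gv (n + k) (phiC C n k v) ∉ Bad
        rcases step_cases C hwf (n + k) with ⟨-, p, q, hpq, hg, hp, hq⟩ | ⟨hid, -⟩
        · rw [hg]
          rcases mergeVal_cases p q (phiC C n k v) with hc | hc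
          · rw [hc]; exact ihk
          · rw [hc]
            rcases min_cases p q with ⟨h', -⟩ | ⟨h', -⟩ <;> rw [h']
            · exact hinv (n + k) p hp
            · exact hinv (n + k) q hq
        · rw [hid]; exact ihk
  obtain ⟨m, hm⟩ := phiC_stab C hwf n v
  rw [← hm m (le_refl m)]
  exact hphi m

/-- Structure of the second limit tableau for a tgd. -/
lemma lim2_struct {R0 : Set Val} {T T' : Rel} (hR : R.Finite)
    (C : ChaseSeq R Sg (Dep.tgd R0 T T')) (hwf : ∀ d ∈ Sg, Dep.wf R d)
    (hT'fin : T'.Finite) (hT'c : restrictR R T' = T') :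
    ∀ t'' ∈ chaseLim2 C, ∃ t' ∈ T', t'' = restrictT R (rhoC C 0 ∘ t') := by
  intro t'' ht''
  obtain ⟨m, hm⟩ := ht''
  obtain ⟨K, hK⟩ := exists_uniform (valsOf_finite hR hT'fin)
    (fun v k => phiC C 0 k v = rhoC C 0 v)
    (fun v _ => phiC_stab C hwf 0 v)
  set n := max m K with hn
  have h1 : t'' ∈ pr2T (C.seq n) := hm n (le_max_left _ _)
  obtain ⟨Tn, hTn⟩ := tgd_shape C hwf hT'c n
  rw [hTn] at h1
  obtain ⟨t', ht', rfl⟩ := h1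
  refine ⟨t', ht', ?_⟩
  apply restrictT_congr
  intro a ha
  show phiC C 0 n (t' a) = rhoC C 0 (t' a)
  exact hK (t' a) (mem_valsOf ht' ha) n (le_max_right _ _)

end ChaseDev5


/-- (Non-trivial chase result gives a counter-model.) If the chase
result of a chasing sequence of `σ` over `Σ` is not trivial, then its first component
`T¹` is a relation over `R` satisfying every member of `Σ` but not `σ`. -/
theorem chase_counter_model
    (R : Set Val) (hR : R.Finite)
    (Sg : Set Dep) (hwf : ∀ d ∈ Sg, Dep.wf R d)
    (s : Dep) (hs : Dep.wf R s)
    (C : ChaseSeq R Sg s)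
    (hnt : ¬ TrivialDep R C.result) :
    (∀ d ∈ Sg, Dep.sat (pr1 C.result) d) ∧ ¬ Dep.sat (pr1 C.result) s := by
  cases s with
  | ind A B => exact (hs : False).elim
  | egd R0 T x y =>
      obtain ⟨rfl, hTfin, hTc, hx, hy⟩ := hs
      have hs' : Dep.wf R0 (Dep.egd R0 T x y) := ⟨rfl, hTfin, hTc, hx, hy⟩
      have hres : pr1 C.result = chaseLim1 C := rfl
      constructor
      · rw [hres]; exact sat_all C hR hs' hwf
      · -- the chase limit does not satisfy the egd
        rw [hres]
        intro hsat
        -- the limit valuation embeds the tableau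
        have hembT : Embeds R0 (rhoC C 0) T (chaseLim1 C) := by
          intro t ht
          have ht0 : t ∈ pr1 (C.seq 0) := by rw [C.init]; exact ht
          exact mem_restrictR_of_canon (pushLim C hR hs' hwf 0 ht0) (restrictT_idem R0 _)
        have hxy : rhoC C 0 x = rhoC C 0 y := hsat (rhoC C 0) hembT
        apply hnt
        show evVal (fun n => eqFst (C.seq n)) = evVal (fun n => eqSnd (C.seq n))
        have hfx : (fun n => eqFst (C.seq n)) = fun n => phiC C 0 n x := by
          funext n
          obtain ⟨Tn, hTn⟩ := egd_shape C hwf n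
          rw [hTn]; rfl
        have hfy : (fun n => eqSnd (C.seq n)) = fun n => phiC C 0 n y := by
          funext n
          obtain ⟨Tn, hTn⟩ := egd_shape C hwf n
          rw [hTn]; rfl
        rw [hfx, hfy]
        exact hxy
  | tgd R0 T T' =>
      obtain ⟨rfl, hTfin, hT'fin, hTc, hT'c⟩ := hs
      have hs' : Dep.wf R0 (Dep.tgd R0 T T') := ⟨rfl, hTfin, hT'fin, hTc, hT'c⟩
      have hres : pr1 C.result = chaseLim1 C := rfl
      constructor
      · rw [hres]; exact sat_all C hR hs' hwf
      · rw [hres]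
        intro hsat
        apply hnt
        -- the set of values of `T'` never occurring in the chase tableau
        set Bad : Set Val := valsOf R0 T' \ valsOf R0 T with hBadDef
        have hB0 : ∀ v ∈ valsOf R0 (pr1 (Dep.tgd R0 T T')), v ∉ Bad := by
          intro v hv hbad
          exact hbad.2 hv
        have hBd : Bad ⊆ depVals R0 (Dep.tgd R0 T T') := fun v hv => Or.inr hv.1
        have hinv := bad_inv C hs' hwf Bad hB0 hBd
        have hembT : Embeds R0 (rhoC C 0) T (chaseLim1 C) := by
          intro t ht
          have ht0 : t ∈ pr1 (C.seq 0) := by rw [C.init]; exact ht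
          exact mem_restrictR_of_canon (pushLim C hR hs' hwf 0 ht0) (restrictT_idem R0 _)
        obtain ⟨g, hg1, hg2⟩ := hsat (rhoC C 0) hembT
        -- `g` is constant on fibres of the limit valuation over `Val(T')`
        have fiber : ∀ w ∈ valsOf R0 T', ∀ w' ∈ valsOf R0 T',
            rhoC C 0 w = rhoC C 0 w' → g w = g w' := by
          intro w hw w' hw' heq
          by_cases hwT : w ∈ valsOf R0 T <;> by_cases hw'T : w' ∈ valsOf R0 T
          · rw [hg1 w ⟨hwT, hw⟩, hg1 w' ⟨hw'T, hw'⟩, heq]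
          · exfalso
            have hb : w' ∈ Bad := ⟨hw', hw'T⟩
            have h1 : rhoC C 0 w' = w' := rho_fix_bad C hwf Bad hinv 0 w' hb
            have h2 : rhoC C 0 w ∉ Bad := by
              apply rho_notbad C hwf Bad hinv 0
              intro hwb
              exact hwb.2 hwT
            rw [heq, h1] at h2
            exact h2 hb
          · exfalso
            have hb : w ∈ Bad := ⟨hw, hwT⟩
            have h1 : rhoC C 0 w = w := rho_fix_bad C hwf Bad hinv 0 w hb
            have h2 : rhoC C 0 w' ∉ Bad := by
              apply rho_notbad C hwf Bad hinv 0
              intro hwb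
              exact hwb.2 hw'T
            rw [← heq, h1] at h2
            exact h2 hb
          · have h1 : rhoC C 0 w = w := rho_fix_bad C hwf Bad hinv 0 w ⟨hw, hwT⟩
            have h2 : rhoC C 0 w' = w' := rho_fix_bad C hwf Bad hinv 0 w' ⟨hw', hw'T⟩
            rw [h1, h2] at heq
            rw [heq]
        -- values of the limit tableau avoid `Bad`
        have hlim1 : ∀ v ∈ valsOf R0 (chaseLim1 C), v ∉ Bad := by
          rintro v ⟨u, ⟨m, hm⟩, a, ha, rfl⟩
          exact hinv m (u a) (mem_valsOf (hm m (le_refl m)) ha)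
        -- the triviality witness
        classical
        set h : Val → Val := fun v =>
          if hv : ∃ w, w ∈ valsOf R0 T' ∧ rhoC C 0 w = v then g hv.choose else v with hhdef
        show TrivialDep R0 C.result
        show ∃ f : Val → Val, (∀ v ∈ valsOf R0 (chaseLim1 C) ∩ valsOf R0 (chaseLim2 C),
            f v = v) ∧ ∀ t' ∈ chaseLim2 C, restrictT R0 (f ∘ t') ∈ restrictR R0 (chaseLim1 C)
        refine ⟨h, ?_, ?_⟩
        · rintro v ⟨hv1, hv2⟩
          obtain ⟨t'', ht'', a, ha, rfl⟩ := hv2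
          obtain ⟨t', ht', rfl⟩ := lim2_struct hR C hwf hT'fin hT'c t'' ht''
          have hva : restrictT R0 (rhoC C 0 ∘ t') a = rhoC C 0 (t' a) :=
            restrictT_apply_mem ha _
          rw [hva] at hv1 ⊢
          have hex : ∃ w, w ∈ valsOf R0 T' ∧ rhoC C 0 w = rhoC C 0 (t' a) :=
            ⟨t' a, mem_valsOf ht' ha, rfl⟩
          simp only [hhdef, dif_pos hex]
          obtain ⟨hw0, hw0e⟩ := hex.choose_spec
          by_cases hwT : hex.choose ∈ valsOf R0 T
          · rw [hg1 _ ⟨hwT, hw0⟩, hw0e]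
          · exfalso
            have hb : hex.choose ∈ Bad := ⟨hw0, hwT⟩
            have h1 : rhoC C 0 hex.choose = hex.choose := rho_fix_bad C hwf Bad hinv 0 _ hb
            rw [h1] at hw0e
            rw [hw0e] at hb
            exact hlim1 _ hv1 hb
        · intro t'' ht''
          obtain ⟨t', ht', rfl⟩ := lim2_struct hR C hwf hT'fin hT'c t'' ht''
          have hkey : restrictT R0 (h ∘ restrictT R0 (rhoC C 0 ∘ t')) =
              restrictT R0 (g ∘ t') := by
            apply restrictT_congr
            intro a ha
            show h (restrictT R0 (rhoC C 0 ∘ t') a) = g (t' a)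
            rw [restrictT_apply_mem ha]
            show h (rhoC C 0 (t' a)) = g (t' a)
            have hex : ∃ w, w ∈ valsOf R0 T' ∧ rhoC C 0 w = rhoC C 0 (t' a) :=
              ⟨t' a, mem_valsOf ht' ha, rfl⟩
            simp only [hhdef, dif_pos hex]
            obtain ⟨hw0, hw0e⟩ := hex.choose_spec
            exact fiber _ hw0 _ (mem_valsOf ht' ha) hw0e
          rw [hkey]
          exact hg2 t' ht'


end
end EmbeddedDependencies
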